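/- Let π be a uniform random permutation of [n] and A,B ⊆ [n] with e_π(A,B) = |{x ∈ A : π(x) ∈ B}|. Then the exponential moment satisfies E[exp(λ e_π(A,B))] ≤ exp(|A||B| e^{1+λ} / n) for every λ > 0. -/

import Mathlib

/-!
With `t = e^λ - 1`, expand `e^{λX} = (1 + t)^X = ∑ⱼ tʲ C(X, j)`. The binomial moment
`∑_π C(X_π, j)` counts pairs `(S, π)` with `S` a `j`-subset of `A` and `π(S) ⊆ B`; for
fixed `S` there are at most `(|B|)_j (n - j)!` such `π`. Hence
`E C(X, j) ≤ C(|A|, j) (|B|)_j / (n)_j ≤ (|A||B|/n)ʲ / j!`, and summing over `j` gives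
`E e^{λX} ≤ exp((e^λ - 1)|A||B|/n)`.
-/

open Finset Function Equiv
open scoped Nat

theorem Nat.sub_mul_le_mul_sub {b n : ℕ} (hbn : b ≤ n) (j : ℕ) :
    (b - j) * n ≤ b * (n - j) := by
  rw [Nat.sub_mul, Nat.mul_sub]
  exact Nat.sub_le_sub_left (by rw [mul_comm j n]; exact Nat.mul_le_mul_right j hbn) _

theorem Nat.descFactorial_mul_pow_le_pow_mul_descFactorial {b n : ℕ} (hbn : b ≤ n) (j : ℕ) :
    b.descFactorial j * n ^ j ≤ b ^ j * n.descFactorial j := by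
  induction j with
  | zero => simp
  | succ j ih =>
    calc b.descFactorial (j + 1) * n ^ (j + 1)
        = ((b - j) * n) * (b.descFactorial j * n ^ j) := by
          rw [descFactorial_succ, pow_succ]; ring
      _ ≤ (b * (n - j)) * (b ^ j * n.descFactorial j) :=
          Nat.mul_le_mul (sub_mul_le_mul_sub hbn j) ih
      _ = b ^ (j + 1) * n.descFactorial (j + 1) := by rw [descFactorial_succ, pow_succ]; ring

theorem add_one_pow_eq_sum_range_mul_choose {R : Type*} [CommSemiring R] (t : R) {m N : ℕ}
    (hmN : m < N) : (t + 1) ^ m = ∑ j ∈ range N, t ^ j * m.choose j := by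
  rw [add_pow]
  simp only [one_pow, mul_one]
  refine sum_subset (range_subset_range.2 hmN) fun j _ hj => ?_
  rw [Nat.choose_eq_zero_of_lt (by simpa using hj), Nat.cast_zero, mul_zero]

theorem Finset.powersetCard_filter {α : Type*} (j : ℕ) (A : Finset α) (p : α → Prop)
    [DecidablePred p] :
    powersetCard j {x ∈ A | p x} = {S ∈ powersetCard j A | ∀ x ∈ S, p x} := by
  ext S
  simp only [mem_powersetCard, mem_filter, subset_iff]
  grind

section Perm

variable {α : Type*} [Fintype α] [DecidableEq α]

theorem card_perm_mapsTo_le (S B : Finset α) :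
    #{π : Perm α | ∀ x ∈ S, π x ∈ B} ≤ (#B).descFactorial #S * (Fintype.card α - #S)! := by
  let image (g : S ↪ B) : Finset α := univ.map (g.trans (Embedding.subtype _))
  let restrict (π : {π : Perm α // ∀ x ∈ S, π x ∈ B}) :
      Σ g : S ↪ B, ((Sᶜ : Finset α) ↪ ((image g)ᶜ : Finset α)) :=
    ⟨⟨fun x => ⟨π.1 x, π.2 x x.2⟩,
      fun x y h => Subtype.ext (π.1.injective (congrArg Subtype.val h))⟩,
     ⟨fun y => ⟨π.1 y, by
        simp only [image, mem_compl, mem_map, mem_univ, true_and, not_exists]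
        intro x hx
        exact mem_compl.1 y.2 (π.1.injective hx ▸ x.2)⟩,
      fun x y h => Subtype.ext (π.1.injective (congrArg Subtype.val h))⟩⟩
  have restrict_injective : Injective restrict := by
    intro p q h
    refine Subtype.ext (Equiv.ext fun x => ?_)
    by_cases hx : x ∈ S
    · exact congrArg (fun z => ((z.1 ⟨x, hx⟩ : B) : α)) h
    · exact congrArg (fun z => ((z.2 ⟨x, mem_compl.2 hx⟩ : _) : α)) h
  have card_image (g : S ↪ B) : #(image g) = #S := by simp [image]
  calc #{π : Perm α | ∀ x ∈ S, π x ∈ B} = Fintype.card {π : Perm α // ∀ x ∈ S, π x ∈ B} :=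
        (Fintype.card_subtype _).symm
    _ ≤ Fintype.card (Σ g : S ↪ B, ((Sᶜ : Finset α) ↪ ((image g)ᶜ : Finset α))) :=
        Fintype.card_le_of_injective _ restrict_injective
    _ = _ := by
        simp [Fintype.card_sigma, Fintype.card_embedding_eq, card_image, Nat.descFactorial_self]

theorem sum_choose_card_filter_le (A B : Finset α) (j : ℕ) :
    ∑ π : Perm α, (#{x ∈ A | π x ∈ B}).choose j
      ≤ (#A).choose j * ((#B).descFactorial j * (Fintype.card α - j)!) := by
  calc ∑ π : Perm α, (#{x ∈ A | π x ∈ B}).choose j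
      = ∑ π : Perm α, #{S ∈ powersetCard j A | ∀ x ∈ S, π x ∈ B} := by
        refine sum_congr rfl fun π _ => ?_
        rw [← card_powersetCard, powersetCard_filter]
        congr! -- the two filters differ only in their `Decidable` instances
    _ = ∑ S ∈ powersetCard j A, #{π : Perm α | ∀ x ∈ S, π x ∈ B} :=
        sum_card_bipartiteAbove_eq_sum_card_bipartiteBelow _
    _ ≤ ∑ S ∈ powersetCard j A, (#B).descFactorial j * (Fintype.card α - j)! :=
        sum_le_sum fun S hS => (mem_powersetCard.1 hS).2 ▸ card_perm_mapsTo_le S B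
    _ = _ := by rw [sum_const, card_powersetCard, smul_eq_mul]

theorem sum_choose_card_filter_div_factorial_le [Nonempty α] (A B : Finset α) {j : ℕ}
    (hj : j ≤ Fintype.card α) :
    (∑ π : Perm α, ((#{x ∈ A | π x ∈ B}).choose j : ℝ)) / (Fintype.card α)!
      ≤ (#A * #B / Fintype.card α : ℝ) ^ j / j ! := by
  set n := Fintype.card α
  have hn : 0 < n := Fintype.card_pos
  have descFactorial_ratio_le :
      ((#B).descFactorial j : ℝ) / n.descFactorial j ≤ (#B / n : ℝ) ^ j := by
    rw [div_pow, div_le_div_iff₀ (by simpa [Nat.descFactorial_pos]) (by positivity)]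
    exact_mod_cast Nat.descFactorial_mul_pow_le_pow_mul_descFactorial (card_le_univ B) j
  calc (∑ π : Perm α, ((#{x ∈ A | π x ∈ B}).choose j : ℝ)) / n !
      ≤ ((#A).choose j * ((#B).descFactorial j * (n - j)!) : ℕ) / n ! := by
        gcongr; exact_mod_cast sum_choose_card_filter_le A B j
    _ = (#A).choose j * (((#B).descFactorial j : ℝ) / n.descFactorial j) := by
        rw [← Nat.factorial_mul_descFactorial hj]; push_cast; field_simp
    _ ≤ (#A ^ j / j ! : ℝ) * (#B / n : ℝ) ^ j := by
        gcongr; exact Nat.choose_le_pow_div j _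
    _ = (#A * #B / n : ℝ) ^ j / j ! := by ring

theorem sum_exp_mul_card_filter_div_factorial_le [Nonempty α] (A B : Finset α) {lam : ℝ}
    (hlam : 0 ≤ lam) :
    (∑ π : Perm α, Real.exp (lam * #{x ∈ A | π x ∈ B})) / (Fintype.card α)!
      ≤ Real.exp ((Real.exp lam - 1) * (#A * #B / Fintype.card α)) := by
  set n := Fintype.card α
  set t := Real.exp lam - 1
  have ht : 0 ≤ t := sub_nonneg.2 (Real.one_le_exp hlam)
  have binomial_expansion (π : Perm α) : Real.exp (lam * #{x ∈ A | π x ∈ B})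
      = ∑ j ∈ range (n + 1), t ^ j * ((#{x ∈ A | π x ∈ B}).choose j : ℝ) := by
    rw [mul_comm, Real.exp_nat_mul, ← sub_add_cancel (Real.exp lam) 1]
    exact add_one_pow_eq_sum_range_mul_choose _
      (Nat.lt_succ_of_le ((card_filter_le _ _).trans (card_le_univ A)))
  calc (∑ π : Perm α, Real.exp (lam * #{x ∈ A | π x ∈ B})) / n !
      = ∑ j ∈ range (n + 1),
          t ^ j * ((∑ π : Perm α, ((#{x ∈ A | π x ∈ B}).choose j : ℝ)) / n !) := by
        rw [sum_congr rfl fun π _ => binomial_expansion π, sum_comm, sum_div]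
        refine sum_congr rfl fun j _ => ?_
        rw [← mul_sum, mul_div_assoc]
    _ ≤ ∑ j ∈ range (n + 1), t ^ j * ((#A * #B / n : ℝ) ^ j / j !) :=
        sum_le_sum fun j hj => mul_le_mul_of_nonneg_left
          (sum_choose_card_filter_div_factorial_le A B (Nat.lt_succ_iff.1 (mem_range.1 hj)))
          (pow_nonneg ht j)
    _ = ∑ j ∈ range (n + 1), (t * (#A * #B / n)) ^ j / j ! := by
        simp_rw [mul_pow, mul_div_assoc]
    _ ≤ Real.exp (t * (#A * #B / n)) := Real.sum_le_exp_of_nonneg (by positivity) _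

end Perm

/-- Let `π` be a uniformly random permutation of `[n]` and
`A, B ⊆ [n]`, with `e_π(A,B) = |{x ∈ A : π x ∈ B}|`. Then for every `λ > 0`,
`E[exp(λ e_π(A,B))] ≤ exp(|A||B| e^{1+λ}/n)` (the expectation being the average
over all `n!` permutations). -/
theorem perm_exp_moment (n : ℕ) (hn : 1 ≤ n) (A B : Finset (Fin n)) (lam : ℝ)
    (hlam : 0 < lam) :
    (∑ π : Equiv.Perm (Fin n),
        Real.exp (lam * (A.filter fun x => π x ∈ B).card)) / (Nat.factorial n : ℝ)
      ≤ Real.exp ((A.card : ℝ) * B.card * Real.exp (1 + lam) / n) := by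
  have : Nonempty (Fin n) := ⟨⟨0, hn⟩⟩
  have exp_sub_one_le : Real.exp lam - 1 ≤ Real.exp (1 + lam) := by
    linarith [Real.exp_le_exp.2 (show lam ≤ 1 + lam by linarith)]
  calc _ ≤ Real.exp ((Real.exp lam - 1) * (A.card * B.card / n)) := by
        simpa using sum_exp_mul_card_filter_div_factorial_le A B hlam.le
    _ ≤ _ := by
        rw [Real.exp_le_exp, mul_comm, ← mul_div_right_comm]
        gcongr
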